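/- Structure of optimal control sets (Corollary 1): given constraint sets V^X, V^Y ⊆ V, call a pair (C^X, C^Y) feasible if C^X ⊆ V^X, C^Y ⊆ V^Y, and φ(C^X, C^Y) = 1. If some feasible pair exists, then among all feasible pairs minimizing |C^X ∪ C^Y| there exists one such that, setting C := C^X ∪ C^Y, one has C^X = C ∩ V^X and C^Y = C ∩ V^Y. -/
import Mathlib


/-- The quantity `δ_i(z)` determining the best-response action. -/
noncomputable def delta (n : ℕ) (A W : Fin n → Fin n → ℝ) (l b : Fin n → ℝ)
    (i : Fin n) (x y : Fin n → ℝ) : ℝ :=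
  2 * b i * (1 - l i) * ∑ j, W i j * y j + (1 - b i) * ∑ j, A i j * x j

/-- Assumption 1 on the revision sequence: there is `T < ∞` such that every
agent activates at least once in every window of `T` consecutive time steps. -/
def RevOK (n : ℕ) (R : ℕ → Finset (Fin n)) : Prop :=
  ∃ T : ℕ, ∀ t : ℕ, ∀ i : Fin n, ∃ s, s < T ∧ i ∈ R (t + s)

/-- The controlled coevolutionary trajectory with control sets `CX, CY`:
controlled coordinates are pinned to `+1` for all `t ≥ 0`, uncontrolled ones
start at `-1` and follow the best-response dynamics when activated. -/
def IsCtrlTraj (n : ℕ) (A W : Fin n → Fin n → ℝ) (l b : Fin n → ℝ)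
    (R : ℕ → Finset (Fin n)) (CX CY : Finset (Fin n))
    (x y : ℕ → Fin n → ℝ) : Prop :=
  (∀ i ∈ CX, ∀ t, x t i = 1) ∧
  (∀ i ∈ CY, ∀ t, y t i = 1) ∧
  (∀ i, i ∉ CX → x 0 i = -1) ∧
  (∀ i, i ∉ CY → y 0 i = -1) ∧
  (∀ t, ∀ i, i ∉ CX →
    x (t + 1) i =
      if i ∈ R t then
        if 0 < delta n A W l b i (x t) (y t) then 1
        else if delta n A W l b i (x t) (y t) < 0 then -1
        else x t i
      else x t i) ∧
  (∀ t, ∀ i, i ∉ CY →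
    y (t + 1) i =
      if i ∈ R t then (1 - l i) * (∑ j, W i j * y t j) + l i * x (t + 1) i
      else y t i)

/-- The trajectory reaches the `+1` consensus (actions) in finite time. -/
def Reaches (n : ℕ) (x : ℕ → Fin n → ℝ) : Prop :=
  ∃ T : ℕ, ∀ t, T ≤ t → ∀ i, x t i = 1

open Classical in
/-- The objective: phi = 1 iff for every revision sequence satisfying
Assumption 1, the controlled trajectory reaches the +1 consensus. -/
noncomputable def phi (n : ℕ) (A W : Fin n → Fin n → ℝ) (l b : Fin n → ℝ)
    (CX CY : Finset (Fin n)) : ℕ :=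
  if ∀ (R : ℕ → Finset (Fin n)) (x y : ℕ → Fin n → ℝ),
      RevOK n R → IsCtrlTraj n A W l b R CX CY x y → Reaches n x
  then 1 else 0

open Classical

section Aux
variable {n : ℕ} {A W : Fin n → Fin n → ℝ} {l b : Fin n → ℝ}

lemma delta_mono (hA0 : ∀ i j, 0 ≤ A i j) (hW0 : ∀ i j, 0 ≤ W i j)
    (hl : ∀ i, 0 < l i ∧ l i ≤ 1) (hb : ∀ i, 0 < b i ∧ b i ≤ 1)
    (i : Fin n) {x y x' y' : Fin n → ℝ}
    (hx : ∀ j, x j ≤ x' j) (hy : ∀ j, y j ≤ y' j) :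
    delta n A W l b i x y ≤ delta n A W l b i x' y' := by
  unfold delta
  have h1 : (0:ℝ) ≤ 2 * b i * (1 - l i) := by nlinarith [(hb i).1, (hl i).2]
  have h2 : (0:ℝ) ≤ 1 - b i := by linarith [(hb i).2]
  have s1 : ∑ j, W i j * y j ≤ ∑ j, W i j * y' j :=
    Finset.sum_le_sum fun j _ => mul_le_mul_of_nonneg_left (hy j) (hW0 i j)
  have s2 : ∑ j, A i j * x j ≤ ∑ j, A i j * x' j :=
    Finset.sum_le_sum fun j _ => mul_le_mul_of_nonneg_left (hx j) (hA0 i j)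
  have := mul_le_mul_of_nonneg_left s1 h1
  have := mul_le_mul_of_nonneg_left s2 h2
  linarith

lemma traj_bounds (hW0 : ∀ i j, 0 ≤ W i j) (hWrow : ∀ i, ∑ j, W i j = 1)
    (hl : ∀ i, 0 < l i ∧ l i ≤ 1)
    {R : ℕ → Finset (Fin n)} {CX CY : Finset (Fin n)} {x y : ℕ → Fin n → ℝ}
    (h : IsCtrlTraj n A W l b R CX CY x y) :
    ∀ t i, (-1 ≤ x t i ∧ x t i ≤ 1) ∧ (-1 ≤ y t i ∧ y t i ≤ 1) := by
  obtain ⟨hx1, hy1, hx0, hy0, hxs, hys⟩ := h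
  intro t
  induction t with
  | zero =>
    intro i
    constructor
    · by_cases hi : i ∈ CX
      · rw [hx1 i hi 0]; norm_num
      · rw [hx0 i hi]; norm_num
    · by_cases hi : i ∈ CY
      · rw [hy1 i hi 0]; norm_num
      · rw [hy0 i hi]; norm_num
  | succ t ih =>
    intro i
    have hxb : -1 ≤ x (t+1) i ∧ x (t+1) i ≤ 1 := by
      by_cases hi : i ∈ CX
      · rw [hx1 i hi (t+1)]; norm_num
      · rw [hxs t i hi]
        split_ifs with h1 h2 h3
        · norm_num
        · norm_num
        · exact (ih i).1
        · exact (ih i).1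
    refine ⟨hxb, ?_⟩
    by_cases hi : i ∈ CY
    · rw [hy1 i hi (t+1)]; norm_num
    · rw [hys t i hi]
      split_ifs with h1
      · have hsu : ∑ j, W i j * y t j ≤ 1 := by
          calc ∑ j, W i j * y t j ≤ ∑ j, W i j * 1 :=
                Finset.sum_le_sum fun j _ =>
                  mul_le_mul_of_nonneg_left ((ih j).2.2) (hW0 i j)
            _ = 1 := by simp [hWrow i]
        have hsl : (-1:ℝ) ≤ ∑ j, W i j * y t j := by
          calc (-1:ℝ) = ∑ j, W i j * (-1) := by simp [hWrow i]
            _ ≤ ∑ j, W i j * y t j :=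
                Finset.sum_le_sum fun j _ =>
                  mul_le_mul_of_nonneg_left ((ih j).2.1) (hW0 i j)
        have hl1 := (hl i).1
        have hl2 := (hl i).2
        constructor
        · nlinarith [hxb.1]
        · nlinarith [hxb.2]
      · exact (ih i).2

lemma traj_compare (hA0 : ∀ i j, 0 ≤ A i j) (hW0 : ∀ i j, 0 ≤ W i j)
    (hWrow : ∀ i, ∑ j, W i j = 1)
    (hl : ∀ i, 0 < l i ∧ l i ≤ 1) (hb : ∀ i, 0 < b i ∧ b i ≤ 1)
    {R : ℕ → Finset (Fin n)} {CX CY CX' CY' : Finset (Fin n)}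
    (hX : CX ⊆ CX') (hY : CY ⊆ CY')
    {x y x' y' : ℕ → Fin n → ℝ}
    (h : IsCtrlTraj n A W l b R CX CY x y)
    (h' : IsCtrlTraj n A W l b R CX' CY' x' y') :
    ∀ t i, x t i ≤ x' t i ∧ y t i ≤ y' t i := by
  have hbd := traj_bounds hW0 hWrow hl h
  have hbd' := traj_bounds hW0 hWrow hl h'
  obtain ⟨hx1, hy1, hx0, hy0, hxs, hys⟩ := h
  obtain ⟨hx1', hy1', hx0', hy0', hxs', hys'⟩ := h'
  intro t
  induction t with
  | zero =>
    intro i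
    constructor
    · by_cases hi : i ∈ CX'
      · rw [hx1' i hi 0]; exact ((hbd 0 i).1).2
      · have hi2 : i ∉ CX := fun hc => hi (hX hc)
        rw [hx0 i hi2, hx0' i hi]
    · by_cases hi : i ∈ CY'
      · rw [hy1' i hi 0]; exact ((hbd 0 i).2).2
      · have hi2 : i ∉ CY := fun hc => hi (hY hc)
        rw [hy0 i hi2, hy0' i hi]
  | succ t ih =>
    have hxstep : ∀ i, x (t+1) i ≤ x' (t+1) i := by
      intro i
      by_cases hi : i ∈ CX'
      · rw [hx1' i hi (t+1)]; exact ((hbd (t+1) i).1).2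
      · have hi2 : i ∉ CX := fun hc => hi (hX hc)
        rw [hxs t i hi2, hxs' t i hi]
        by_cases hR : i ∈ R t
        · rw [if_pos hR, if_pos hR]
          have hd : delta n A W l b i (x t) (y t) ≤ delta n A W l b i (x' t) (y' t) :=
            delta_mono hA0 hW0 hl hb i (fun j => (ih j).1) (fun j => (ih j).2)
          split_ifs with h1 h2 h3 h4 h5 h6 h7
          all_goals first
            | rfl
            | linarith [((hbd (t) i).1).1, ((hbd (t) i).1).2,
                ((hbd' (t) i).1).1, ((hbd' (t) i).1).2, (ih i).1]
        · rw [if_neg hR, if_neg hR]; exact (ih i).1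
    refine fun i => ⟨hxstep i, ?_⟩
    by_cases hi : i ∈ CY'
    · rw [hy1' i hi (t+1)]; exact ((hbd (t+1) i).2).2
    · have hi2 : i ∉ CY := fun hc => hi (hY hc)
      rw [hys t i hi2, hys' t i hi]
      by_cases hR : i ∈ R t
      · rw [if_pos hR, if_pos hR]
        have hsu : ∑ j, W i j * y t j ≤ ∑ j, W i j * y' t j :=
          Finset.sum_le_sum fun j _ =>
            mul_le_mul_of_nonneg_left ((ih j).2) (hW0 i j)
        have hl1 := (hl i).1
        have hl2 := (hl i).2
        have := hxstep i
        nlinarith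
      · rw [if_neg hR, if_neg hR]; exact (ih i).2

/-- Explicit construction of a trajectory. -/
noncomputable def trajF (n : ℕ) (A W : Fin n → Fin n → ℝ) (l b : Fin n → ℝ)
    (R : ℕ → Finset (Fin n)) (CX CY : Finset (Fin n)) :
    ℕ → (Fin n → ℝ) × (Fin n → ℝ)
  | 0 => (fun i => if i ∈ CX then 1 else -1, fun i => if i ∈ CY then 1 else -1)
  | (t+1) =>
    let p := trajF n A W l b R CX CY t
    let nx : Fin n → ℝ := fun i => if i ∈ CX then 1 else
      if i ∈ R t then
        if 0 < delta n A W l b i p.1 p.2 then 1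
        else if delta n A W l b i p.1 p.2 < 0 then -1 else p.1 i
      else p.1 i
    (nx, fun i => if i ∈ CY then 1 else
      if i ∈ R t then (1 - l i) * (∑ j, W i j * p.2 j) + l i * nx i else p.2 i)

lemma exists_traj (R : ℕ → Finset (Fin n)) (CX CY : Finset (Fin n)) :
    ∃ x y : ℕ → Fin n → ℝ, IsCtrlTraj n A W l b R CX CY x y := by
  refine ⟨fun t => (trajF n A W l b R CX CY t).1,
          fun t => (trajF n A W l b R CX CY t).2, ?_, ?_, ?_, ?_, ?_, ?_⟩
  · intro i hi t
    cases t with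
    | zero => simp [trajF, hi]
    | succ t => simp [trajF, hi]
  · intro i hi t
    cases t with
    | zero => simp [trajF, hi]
    | succ t => simp [trajF, hi]
  · intro i hi; simp [trajF, hi]
  · intro i hi; simp [trajF, hi]
  · intro t i hi
    show (trajF n A W l b R CX CY (t+1)).1 i = _
    rw [trajF]
    simp only [hi, if_false]
  · intro t i hi
    show (trajF n A W l b R CX CY (t+1)).2 i = _
    rw [trajF]
    simp only [hi, if_false]
    by_cases hR : i ∈ R t
    · rw [if_pos hR, if_pos hR]
      congr 1
      by_cases hiX : i ∈ CX
      · simp only [hiX, if_true]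
        conv_rhs => rw [trajF]
        simp [hiX, hR]
      · conv_rhs => rw [trajF]
        simp only [hiX, if_false]
        simp [hR]
    · rw [if_neg hR, if_neg hR]

lemma phi_mono (hA0 : ∀ i j, 0 ≤ A i j) (hW0 : ∀ i j, 0 ≤ W i j)
    (hWrow : ∀ i, ∑ j, W i j = 1)
    (hl : ∀ i, 0 < l i ∧ l i ≤ 1) (hb : ∀ i, 0 < b i ∧ b i ≤ 1)
    {CX CY CX' CY' : Finset (Fin n)} (hX : CX ⊆ CX') (hY : CY ⊆ CY')
    (h : phi n A W l b CX CY = 1) : phi n A W l b CX' CY' = 1 := by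
  unfold phi at h ⊢
  split_ifs at h with hc
  · rw [if_pos]
    intro R x' y' hR htraj'
    obtain ⟨x, y, htraj⟩ := exists_traj (A := A) (W := W) (l := l) (b := b) R CX CY
    obtain ⟨T, hT⟩ := hc R x y hR htraj
    refine ⟨T, fun t ht i => ?_⟩
    have h1 := (traj_compare hA0 hW0 hWrow hl hb hX hY htraj htraj' t i).1
    have h2 := ((traj_bounds hW0 hWrow hl htraj' t i).1).2
    have h3 := hT t ht i
    linarith

end Aux

/-- Corollary 1, structure of optimal control sets. -/
theorem optimal_control_set_structure
    (n : ℕ) (A W : Fin n → Fin n → ℝ) (l b : Fin n → ℝ)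
    (hA0 : ∀ i j, 0 ≤ A i j) (hA1 : ∀ i j, A i j ≤ 1) (hArow : ∀ i, ∑ j, A i j = 1)
    (hW0 : ∀ i j, 0 ≤ W i j) (hW1 : ∀ i j, W i j ≤ 1) (hWrow : ∀ i, ∑ j, W i j = 1)
    (hl : ∀ i, 0 < l i ∧ l i ≤ 1) (hb : ∀ i, 0 < b i ∧ b i ≤ 1)
    (VX VY : Finset (Fin n))
    (hfeas : ∃ CX CY : Finset (Fin n),
      CX ⊆ VX ∧ CY ⊆ VY ∧ phi n A W l b CX CY = 1) :
    ∃ CX CY : Finset (Fin n),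
      (CX ⊆ VX ∧ CY ⊆ VY ∧ phi n A W l b CX CY = 1) ∧
      (∀ DX DY : Finset (Fin n),
        DX ⊆ VX → DY ⊆ VY → phi n A W l b DX DY = 1 →
          (CX ∪ CY).card ≤ (DX ∪ DY).card) ∧
      CX = (CX ∪ CY) ∩ VX ∧ CY = (CX ∪ CY) ∩ VY := by
  classical
  set P : ℕ → Prop := fun m => ∃ CX CY : Finset (Fin n),
    CX ⊆ VX ∧ CY ⊆ VY ∧ phi n A W l b CX CY = 1 ∧ (CX ∪ CY).card = m with hP
  have hex : ∃ m, P m := by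
    obtain ⟨CX, CY, h1, h2, h3⟩ := hfeas
    exact ⟨(CX ∪ CY).card, CX, CY, h1, h2, h3, rfl⟩
  obtain ⟨CX, CY, hCX, hCY, hphi, hcard⟩ := Nat.find_spec hex
  set C := CX ∪ CY with hC
  refine ⟨C ∩ VX, C ∩ VY, ⟨Finset.inter_subset_right, Finset.inter_subset_right, ?_⟩, ?_, ?_, ?_⟩
  case _ =>
    exact phi_mono hA0 hW0 hWrow hl hb
      (fun i hi => Finset.mem_inter.mpr ⟨Finset.mem_union_left _ hi, hCX hi⟩)
      (fun i hi => Finset.mem_inter.mpr ⟨Finset.mem_union_right _ hi, hCY hi⟩) hphi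
  all_goals
    have hCeq : C ∩ VX ∪ C ∩ VY = C := by
      apply Finset.Subset.antisymm
      · exact Finset.union_subset Finset.inter_subset_left Finset.inter_subset_left
      · intro i hi
        rcases Finset.mem_union.mp hi with h | h
        · exact Finset.mem_union_left _ (Finset.mem_inter.mpr ⟨hi, hCX h⟩)
        · exact Finset.mem_union_right _ (Finset.mem_inter.mpr ⟨hi, hCY h⟩)
  · intro DX DY hDX hDY hDphi
    rw [hCeq, hcard]
    exact Nat.find_min' hex ⟨DX, DY, hDX, hDY, hDphi, rfl⟩
  · rw [hCeq]
  · rw [hCeq]
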